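/- arXiv:2004.05145 — 5 statements merged into one kernel-verified Lean document; each statement's English description precedes it below -/
import Mathlib

section
/- Every u ∈ [0,1] is the average of two real numbers each belonging to the middle-thirds Cantor set 𝒞; that is, for every u ∈ [0,1] there exist a, b ∈ 𝒞 with u = (a + b)/2. -/
/-!
Write `u` in base 3. A ternary digit `d ∈ {0, 1, 2}` splits as `2d = t + s` with `t, s ∈ {0, 2}`
(`0 = 0 + 0`, `2 = 2 + 0`, `4 = 2 + 2`), so splitting every digit of `u` this way writes `2u`
as the sum of two numbers whose ternary digits all lie in `{0, 2}`.
-/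

/-- The middle-thirds Cantor set: all reals of the form `∑ tᵢ / 3^i` (`i ≥ 1`)
with each `tᵢ ∈ {0, 2}`. -/
def middleThirdsCantor : Set ℝ :=
  {x : ℝ | ∃ t : ℕ → ℝ, (∀ i, t i = 0 ∨ t i = 2) ∧ x = ∑' i : ℕ, t i / 3 ^ (i + 1)}

open Real

theorem ofDigits_add_ofDigits_eq_mul {b m : ℕ} {x y z : ℕ → Fin b}
    (h : ∀ i, (x i : ℕ) + y i = m * z i) :
    ofDigits x + ofDigits y = m * ofDigits z := by
  rw [ofDigits, ofDigits, ofDigits, ← summable_ofDigitsTerm.tsum_add summable_ofDigitsTerm,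
    ← summable_ofDigitsTerm.tsum_mul_left]
  congr 1 with i
  have hi : (x i : ℝ) + y i = m * z i := mod_cast h i
  simp only [ofDigitsTerm]
  linear_combination ((b : ℝ) ^ (i + 1))⁻¹ * hi

theorem ofDigits_mem_middleThirdsCantor {a : ℕ → Fin 3} (h : ∀ i, a i ≠ 1) :
    ofDigits a ∈ middleThirdsCantor := by
  refine ⟨fun i => a i, fun i => ?_, ?_⟩
  · rcases (show a i = 0 ∨ a i = 2 by have := h i; omega) with hd | hd <;> simp [hd]
  · simp only [ofDigits, ofDigitsTerm, div_eq_mul_inv, Nat.cast_ofNat]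

theorem average_of_two_cantor_elements :
    ∀ u ∈ Set.Icc (0 : ℝ) 1,
      ∃ a ∈ middleThirdsCantor, ∃ b ∈ middleThirdsCantor, u = (a + b) / 2 := by
  intro u hu
  obtain ⟨d, -, rfl⟩ := ofDigits_SurjOn (b := 3) (by norm_num) hu
  let hi : Fin 3 → Fin 3 := fun k => if k = 0 then 0 else 2
  let lo : Fin 3 → Fin 3 := fun k => if k = 2 then 2 else 0
  have hi_ne_one : ∀ k, hi k ≠ 1 := by decide
  have lo_ne_one : ∀ k, lo k ≠ 1 := by decide
  have hi_add_lo : ∀ k, (hi k : ℕ) + lo k = 2 * k := by decide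
  refine ⟨ofDigits fun i => hi (d i), ofDigits_mem_middleThirdsCantor fun i => hi_ne_one (d i),
    ofDigits fun i => lo (d i), ofDigits_mem_middleThirdsCantor fun i => lo_ne_one (d i), ?_⟩
  rw [ofDigits_add_ofDigits_eq_mul fun i => hi_add_lo (d i)]
  push_cast
  ring
end

section
/- The sumset of the middle-thirds Cantor set with itself is the full interval: 𝒞 + 𝒞 = [0,2], where 𝒞 + 𝒞 = {a + b : a, b ∈ 𝒞}. -/
/-!
A point of `𝒞` is a ternary expansion with digits in `{0, 2}`. For `x ∈ [0, 2]`, expand `x / 2`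
in base 3 with digits `dᵢ ∈ {0, 1, 2}`; each doubled digit `2 dᵢ ∈ {0, 2, 4}` is a sum of two
digits from `{0, 2}`, and splitting digitwise writes `x` as a sum of two points of `𝒞`.
-/

open Real

theorem middleThirdsCantor_eq_cantorSet : middleThirdsCantor = cantorSet := by
  rw [cantorSet_eq_zero_two_ofDigits]
  ext x
  constructor
  · rintro ⟨t, ht, rfl⟩
    refine ⟨fun i ↦ if t i = 0 then 0 else 2, fun i ↦ by dsimp only; split_ifs <;> decide, ?_⟩
    refine tsum_congr fun i ↦ ?_
    rcases ht i with h | h <;> simp [ofDigitsTerm, h, div_eq_mul_inv]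
  · rintro ⟨a, ha, rfl⟩
    refine ⟨fun i ↦ a i, fun i ↦ ?_, by simp [ofDigits, ofDigitsTerm, div_eq_mul_inv]⟩
    rcases (show a i = 0 ∨ a i = 2 by have := ha i; omega) with h | h <;> simp [h]

theorem Real.ofDigits_add_ofDigits {b : ℕ} {u v w : ℕ → Fin b} {c : ℝ}
    (h : ∀ i, (u i : ℝ) + v i = c * w i) : ofDigits u + ofDigits v = c * ofDigits w := by
  rw [ofDigits, ofDigits, ofDigits, ← summable_ofDigitsTerm.tsum_add summable_ofDigitsTerm,
    ← tsum_mul_left]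
  refine tsum_congr fun i ↦ ?_
  simp only [ofDigitsTerm, ← add_mul, h, mul_assoc]

def ternaryDigitLow : Fin 3 → Fin 3 := ![0, 0, 2]

def ternaryDigitHigh : Fin 3 → Fin 3 := ![0, 2, 2]

theorem ternaryDigitLow_ne_one (d : Fin 3) : ternaryDigitLow d ≠ 1 := by
  fin_cases d <;> decide

theorem ternaryDigitHigh_ne_one (d : Fin 3) : ternaryDigitHigh d ≠ 1 := by
  fin_cases d <;> decide

theorem ternaryDigitLow_add_ternaryDigitHigh (d : Fin 3) :
    (ternaryDigitLow d : ℝ) + ternaryDigitHigh d = 2 * d := by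
  fin_cases d <;> norm_num [ternaryDigitLow, ternaryDigitHigh]

theorem cantor_add_cantor :
    {x : ℝ | ∃ a ∈ middleThirdsCantor, ∃ b ∈ middleThirdsCantor, x = a + b} =
      Set.Icc (0 : ℝ) 2 := by
  simp only [middleThirdsCantor_eq_cantorSet]
  ext x
  constructor
  · rintro ⟨a, ha, b, hb, rfl⟩
    have ha' := cantorSet_subset_unitInterval ha
    have hb' := cantorSet_subset_unitInterval hb
    exact ⟨by linarith [ha'.1, hb'.1], by linarith [ha'.2, hb'.2]⟩
  · rintro ⟨hx₀, hx₂⟩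
    obtain ⟨d, -, hd⟩ := ofDigits_SurjOn (b := 3) (by norm_num)
      (show x / 2 ∈ Set.Icc 0 1 from ⟨by linarith, by linarith⟩)
    rw [cantorSet_eq_zero_two_ofDigits]
    refine ⟨_, ⟨fun i ↦ ternaryDigitLow (d i), fun i ↦ ternaryDigitLow_ne_one _, rfl⟩,
      _, ⟨fun i ↦ ternaryDigitHigh (d i), fun i ↦ ternaryDigitHigh_ne_one _, rfl⟩, ?_⟩
    rw [ofDigits_add_ofDigits fun i ↦ ternaryDigitLow_add_ternaryDigitHigh (d i), hd]
    ring
end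

section
/- Let m ≥ 1 be an integer and set t_m = 2·⌈(3/2)^{m-1}⌉. Then the t_m-fold sumset 𝒞^(m) + 𝒞^(m) + … + 𝒞^(m) (with t_m summands), i.e. the set {x_1^m + x_2^m + … + x_{t_m}^m : x_1, …, x_{t_m} ∈ 𝒞}, contains the closed interval I = [(m+1)(2/3)^m + (m−1), (m−1)(2/3)^m + (m+1)], which has length 2(1 − (2/3)^m). -/
theorem cantorSet_subset_middleThirdsCantor : cantorSet ⊆ middleThirdsCantor := by
  rw [cantorSet_eq_zero_two_ofDigits]
  rintro _ ⟨d, hd, rfl⟩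
  refine ⟨fun i ↦ (d i : ℝ), fun i ↦ ?_, ?_⟩
  · have hdi : (d i : ℕ) ≠ 1 := Fin.val_ne_iff.2 (hd i)
    obtain h | h : (d i : ℕ) = 0 ∨ (d i : ℕ) = 2 := by omega
    all_goals simp [h]
  · simp [Real.ofDigits, Real.ofDigitsTerm, div_eq_mul_inv]

theorem pow_sub_pow_le_of_le_one {x y : ℝ} (m : ℕ) (hy : 0 ≤ y) (hyx : y ≤ x) (hx : x ≤ 1) :
    x ^ m - y ^ m ≤ m * (x - y) := by
  have hmax : max |x| |y| ^ (m - 1) ≤ 1 :=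
    pow_le_one₀ (by positivity) (max_le (by rw [abs_le]; constructor <;> linarith)
      (by rw [abs_le]; constructor <;> linarith))
  calc x ^ m - y ^ m ≤ |x ^ m - y ^ m| := le_abs_self _
    _ ≤ |x - y| * m * max |x| |y| ^ (m - 1) := abs_pow_sub_pow_le ..
    _ ≤ |x - y| * m * 1 := by gcongr
    _ = m * (x - y) := by rw [abs_of_nonneg (by linarith)]; ring

theorem mul_pow_mul_sub_le_pow_sub_pow {c x y : ℝ} (m : ℕ) (hc : 0 ≤ c) (hcy : c ≤ y)
    (hyx : y ≤ x) : m * c ^ (m - 1) * (x - y) ≤ x ^ m - y ^ m := by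
  rw [← geom_sum₂_mul]
  have hterm : ∀ i ∈ Finset.range m, c ^ (m - 1) ≤ x ^ i * y ^ (m - 1 - i) := by
    intro i hi
    have hi : i + (m - 1 - i) = m - 1 := by have := Finset.mem_range.1 hi; omega
    calc c ^ (m - 1) = c ^ i * c ^ (m - 1 - i) := by rw [← pow_add, hi]
      _ ≤ x ^ i * y ^ (m - 1 - i) := mul_le_mul (pow_le_pow_left₀ hc (hcy.trans hyx) i)
        (pow_le_pow_left₀ hc hcy _) (by positivity) (pow_nonneg (hc.trans (hcy.trans hyx)) _)
  have := Finset.card_nsmul_le_sum _ _ _ hterm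
  rw [Finset.card_range, nsmul_eq_mul] at this
  exact mul_le_mul_of_nonneg_right this (by linarith)

theorem exists_le_and_le_of_chain {α : Type*} [LinearOrder α] {S T : ℕ → α} {y : α} :
    ∀ {N : ℕ}, S 0 ≤ y → y ≤ T N → (∀ k < N, S (k + 1) ≤ T k) → ∃ k ≤ N, S k ≤ y ∧ y ≤ T k
  | 0, h0, hN, _ => ⟨0, le_rfl, h0, hN⟩
  | N + 1, h0, hN, hST => by
    by_cases hy : S (N + 1) ≤ y
    · exact ⟨N + 1, le_rfl, hy, hN⟩
    · obtain ⟨k, hk, hk'⟩ := exists_le_and_le_of_chain h0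
        ((not_le.1 hy).le.trans (hST N N.lt_succ_self)) fun k hk ↦ hST k (hk.trans N.lt_succ_self)
      exact ⟨k, hk.trans N.le_succ, hk'⟩

theorem exists_refinement_sum_pow_le_le {m N : ℕ} (hN : 2 ≤ N * (2 / 3 : ℝ) ^ (m - 1))
    {δ y : ℝ} (hδ : 0 ≤ δ) {a : Fin N → ℝ} (ha : ∀ j, 2 / 3 ≤ a j ∧ a j + 3 * δ ≤ 1)
    (hlo : ∑ j, a j ^ m ≤ y) (hhi : y ≤ ∑ j, (a j + 3 * δ) ^ m) :
    ∃ a' : Fin N → ℝ, (∀ j, a' j = a j ∨ a' j = a j + 2 * δ) ∧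
      ∑ j, a' j ^ m ≤ y ∧ y ≤ ∑ j, (a' j + δ) ^ m := by
  set c : ℕ → Fin N → ℝ := fun k j ↦ a j + if (j : ℕ) < k then 2 * δ else 0 with hc
  have hc_ge : ∀ k j, a j ≤ c k j := by
    intro k j; simp only [hc]; split_ifs <;> linarith
  have hstep : ∀ k < N, ∑ j, c (k + 1) j ^ m ≤ ∑ j, (c k j + δ) ^ m := by
    intro k hk
    have hup : ∑ j, c (k + 1) j ^ m - ∑ j, c k j ^ m ≤ m * (2 * δ) := by
      rw [← Finset.sum_sub_distrib, Finset.sum_eq_single ⟨k, hk⟩]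
      · have hak := ha ⟨k, hk⟩
        have h := pow_sub_pow_le_of_le_one (x := a ⟨k, hk⟩ + 2 * δ) m (by linarith) (by linarith)
          (by linarith)
        simpa [hc] using h
      · intro j _ hj
        have : (j : ℕ) ≠ k := fun h ↦ hj (Fin.ext h)
        simp only [hc, show (j : ℕ) < k + 1 ↔ (j : ℕ) < k by omega, sub_self]
      · simp
    have hlow : N * (m * (2 / 3) ^ (m - 1) * δ) ≤ ∑ j, (c k j + δ) ^ m - ∑ j, c k j ^ m := by
      rw [← Finset.sum_sub_distrib]
      have := Finset.card_nsmul_le_sum Finset.univ (fun j ↦ (c k j + δ) ^ m - c k j ^ m)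
        (m * (2 / 3) ^ (m - 1) * δ) fun j _ ↦ le_of_eq_of_le (by ring)
          (mul_pow_mul_sub_le_pow_sub_pow m (by norm_num) ((ha j).1.trans (hc_ge k j))
            (le_add_of_nonneg_right hδ))
      simpa using this
    nlinarith [mul_le_mul_of_nonneg_right hN (by positivity : (0 : ℝ) ≤ m * δ)]
  obtain ⟨k, -, hk⟩ := exists_le_and_le_of_chain (S := fun k ↦ ∑ j, c k j ^ m)
    (T := fun k ↦ ∑ j, (c k j + δ) ^ m) (by simpa [hc] using hlo)
    (hhi.trans_eq (Finset.sum_congr rfl fun j _ ↦ by simp only [hc, if_pos j.2]; ring)) hstep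
  refine ⟨c k, fun j ↦ ?_, hk⟩
  simp only [hc]
  split_ifs <;> simp

noncomputable def cantorLeftEndpoints : ℕ → Set ℝ
  | 0 => {0}
  | n + 1 => (· / 3) '' cantorLeftEndpoints n ∪ (fun x ↦ (2 + x) / 3) '' cantorLeftEndpoints n

theorem cantorLeftEndpoints_subset_cantorSet : ∀ n, cantorLeftEndpoints n ⊆ cantorSet
  | 0 => by simpa [cantorLeftEndpoints] using zero_mem_cantorSet
  | n + 1 => by
    rw [cantorLeftEndpoints, cantorSet_eq_union_halves]
    exact Set.union_subset_union (Set.image_mono (cantorLeftEndpoints_subset_cantorSet n))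
      (Set.image_mono (cantorLeftEndpoints_subset_cantorSet n))

theorem add_le_one_of_mem_cantorLeftEndpoints :
    ∀ {n : ℕ} {a : ℝ}, a ∈ cantorLeftEndpoints n → a + 3⁻¹ ^ n ≤ 1
  | 0, a, ha => by simp_all [cantorLeftEndpoints]
  | n + 1, a, ha => by
    rcases ha with ⟨b, hb, rfl⟩ | ⟨b, hb, rfl⟩ <;>
    · have := add_le_one_of_mem_cantorLeftEndpoints hb
      rw [pow_succ]
      linarith

theorem mem_cantorLeftEndpoints_succ : ∀ {n : ℕ} {a : ℝ}, a ∈ cantorLeftEndpoints n →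
    a ∈ cantorLeftEndpoints (n + 1) ∧ a + 2 * 3⁻¹ ^ (n + 1) ∈ cantorLeftEndpoints (n + 1)
  | 0, a, ha => by
    simp only [cantorLeftEndpoints, Set.mem_singleton_iff] at ha ⊢
    subst ha
    exact ⟨Or.inl ⟨0, rfl, by norm_num⟩, Or.inr ⟨0, rfl, by norm_num⟩⟩
  | n + 1, a, ha => by
    rcases ha with ⟨b, hb, rfl⟩ | ⟨b, hb, rfl⟩
    · exact ⟨Or.inl ⟨b, (mem_cantorLeftEndpoints_succ hb).1, rfl⟩,
        Or.inl ⟨_, (mem_cantorLeftEndpoints_succ hb).2, by ring⟩⟩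
    · exact ⟨Or.inr ⟨b, (mem_cantorLeftEndpoints_succ hb).1, rfl⟩,
        Or.inr ⟨_, (mem_cantorLeftEndpoints_succ hb).2, by ring⟩⟩

theorem exists_cantorLeftEndpoints_sum_pow_le_le {m N : ℕ} (hN : 2 ≤ N * (2 / 3 : ℝ) ^ (m - 1))
    {y : ℝ} (hy : y ∈ Set.Icc (N * (2 / 3 : ℝ) ^ m) N) (n : ℕ) :
    ∃ a : Fin N → ℝ, (∀ j, a j ∈ cantorLeftEndpoints (n + 1) ∧ 2 / 3 ≤ a j) ∧
      ∑ j, a j ^ m ≤ y ∧ y ≤ ∑ j, (a j + 3⁻¹ ^ (n + 1)) ^ m := by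
  induction n with
  | zero =>
    refine ⟨fun _ ↦ 2 / 3, fun _ ↦ ⟨?_, le_rfl⟩, ?_, ?_⟩
    · simpa [div_eq_mul_inv] using (mem_cantorLeftEndpoints_succ (n := 0) rfl).2
    · simpa using hy.1
    · norm_num [hy.2]
  | succ n ih =>
    obtain ⟨a, ha, hlo, hhi⟩ := ih
    have hδ : 3 * (3⁻¹ : ℝ) ^ (n + 2) = 3⁻¹ ^ (n + 1) := by rw [pow_succ]; ring
    obtain ⟨a', ha', hlo', hhi'⟩ :=
      exists_refinement_sum_pow_le_le (δ := 3⁻¹ ^ (n + 2)) hN (by positivity)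
        (fun j ↦ ⟨(ha j).2, hδ ▸ add_le_one_of_mem_cantorLeftEndpoints (ha j).1⟩) hlo (hδ ▸ hhi)
    refine ⟨a', fun j ↦ ?_, hlo', hhi'⟩
    rcases ha' j with h | h <;> rw [h]
    · exact ⟨(mem_cantorLeftEndpoints_succ (ha j).1).1, (ha j).2⟩
    · exact ⟨(mem_cantorLeftEndpoints_succ (ha j).1).2,
        le_add_of_le_of_nonneg (ha j).2 (by positivity)⟩

theorem Icc_subset_image_sum_pow_cantorSet {m N : ℕ} (hN : 2 ≤ N * (2 / 3 : ℝ) ^ (m - 1)) :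
    Set.Icc (N * (2 / 3 : ℝ) ^ m) N ⊆
      (fun x : Fin N → ℝ ↦ ∑ j, x j ^ m) '' Set.univ.pi fun _ ↦ cantorSet := by
  intro y hy
  have hclosed : IsClosed ((fun x : Fin N → ℝ ↦ ∑ j, x j ^ m) '' Set.univ.pi fun _ ↦ cantorSet) :=
    ((isCompact_univ_pi fun _ ↦ isCompact_cantorSet).image (by fun_prop)).isClosed
  choose a ha hlo hhi using exists_cantorLeftEndpoints_sum_pow_le_le hN hy
  have hgap : ∀ n, y - N * m * 3⁻¹ ^ (n + 1) ≤ ∑ j, a n j ^ m := by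
    intro n
    have := Finset.sum_le_sum fun j (_ : j ∈ Finset.univ) ↦
      pow_sub_pow_le_of_le_one (x := a n j + 3⁻¹ ^ (n + 1)) m
        (by linarith [(ha n j).2]) (le_add_of_nonneg_right (by positivity))
        (add_le_one_of_mem_cantorLeftEndpoints (ha n j).1)
    simp only [Finset.sum_sub_distrib, add_sub_cancel_left, Finset.sum_const, Finset.card_univ,
      Fintype.card_fin, nsmul_eq_mul] at this
    linarith [hhi n]
  have hlim : Filter.Tendsto (fun n : ℕ ↦ y - N * m * 3⁻¹ ^ (n + 1)) Filter.atTop (nhds y) := by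
    have := ((tendsto_pow_atTop_nhds_zero_of_lt_one (r := (3⁻¹ : ℝ)) (by norm_num)
      (by norm_num)).comp (Filter.tendsto_add_atTop_nat 1)).const_mul ((N : ℝ) * m) |>.const_sub y
    simpa using this
  exact hclosed.closure_subset <| mem_closure_of_tendsto
    (tendsto_of_tendsto_of_tendsto_of_le_of_le hlim tendsto_const_nhds hgap hlo)
    (Filter.Eventually.of_forall fun n ↦
      ⟨a n, fun j _ ↦ cantorLeftEndpoints_subset_cantorSet _ (ha n j).1, rfl⟩)

theorem natCast_lt_three_halves_pow : ∀ k : ℕ, (k : ℝ) < (3 / 2) ^ k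
  | 0 => by norm_num
  | 1 => by norm_num
  | 2 => by norm_num
  | k + 3 => by
    have := natCast_lt_three_halves_pow (k + 2)
    push_cast at this ⊢
    rw [pow_succ]
    nlinarith

noncomputable def numSummands (m : ℕ) : ℕ := 2 * ⌈(3 / 2 : ℝ) ^ (m - 1)⌉₊

theorem cast_numSummands (m : ℕ) : (numSummands m : ℝ) = 2 * ⌈(3 / 2 : ℝ) ^ (m - 1)⌉₊ := by
  simp [numSummands]

theorem two_le_numSummands_mul (m : ℕ) : 2 ≤ numSummands m * (2 / 3 : ℝ) ^ (m - 1) := by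
  have h : (3 / 2 : ℝ) ^ (m - 1) * (2 / 3) ^ (m - 1) = 1 := by rw [← mul_pow]; norm_num
  rw [cast_numSummands]
  nlinarith [Nat.le_ceil ((3 / 2 : ℝ) ^ (m - 1)), pow_pos (by norm_num : (0 : ℝ) < 2 / 3) (m - 1)]

theorem le_numSummands (m : ℕ) : ((m : ℝ) - 1) * (2 / 3) ^ m + (m + 1) ≤ numSummands m := by
  have hm : m ≤ ⌈(3 / 2 : ℝ) ^ (m - 1)⌉₊ := by
    have := Nat.lt_ceil.2 (natCast_lt_three_halves_pow (m - 1))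
    omega
  rw [cast_numSummands]
  rcases Nat.eq_zero_or_pos m with rfl | hm1
  · norm_num
  · have : (1 : ℝ) ≤ m := by exact_mod_cast hm1
    have : ((m : ℝ) - 1) * (2 / 3) ^ m ≤ (m - 1) * 1 :=
      mul_le_mul_of_nonneg_left (pow_le_one₀ (by norm_num) (by norm_num)) (by linarith)
    have : (m : ℝ) ≤ ⌈(3 / 2 : ℝ) ^ (m - 1)⌉₊ := by exact_mod_cast hm
    linarith

theorem numSummands_mul_le {m : ℕ} (hm : 1 ≤ m) :
    numSummands m * (2 / 3 : ℝ) ^ m ≤ (m + 1) * (2 / 3) ^ m + (m - 1) := by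
  obtain rfl | rfl | hm3 : m = 1 ∨ m = 2 ∨ 3 ≤ m := by omega
  · norm_num [numSummands]
  · have : ⌈(3 / 2 : ℝ)⌉₊ = 2 := by rw [Nat.ceil_eq_iff (by norm_num)]; norm_num
    norm_num [numSummands, this]
  · have h : (3 / 2 : ℝ) ^ (m - 1) * (2 / 3) ^ m = 2 / 3 := by
      rw [← Nat.sub_add_cancel hm, pow_succ, Nat.add_sub_cancel, ← mul_assoc, ← mul_pow]
      norm_num
    have : (3 : ℝ) ≤ m := by exact_mod_cast hm3
    rw [cast_numSummands]
    nlinarith [Nat.ceil_lt_add_one (by positivity : (0 : ℝ) ≤ (3 / 2) ^ (m - 1)),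
      pow_pos (by norm_num : (0 : ℝ) < 2 / 3) m]

theorem Icc_subset_sumset_of_mth_powers (m : ℕ) (hm : 1 ≤ m) :
    Set.Icc (((m : ℝ) + 1) * (2 / 3) ^ m + ((m : ℝ) - 1))
        (((m : ℝ) - 1) * (2 / 3) ^ m + ((m : ℝ) + 1)) ⊆
      {x : ℝ | ∃ f : Fin (2 * ⌈((3 : ℝ) / 2) ^ (m - 1)⌉₊) → ℝ,
        (∀ j, f j ∈ middleThirdsCantor) ∧ x = ∑ j, f j ^ m} ∧
    (((m : ℝ) - 1) * (2 / 3) ^ m + ((m : ℝ) + 1)) -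
        (((m : ℝ) + 1) * (2 / 3) ^ m + ((m : ℝ) - 1)) = 2 * (1 - (2 / 3) ^ m) := by
  refine ⟨fun y hy ↦ ?_, by ring⟩
  obtain ⟨x, hx, rfl⟩ := Icc_subset_image_sum_pow_cantorSet (two_le_numSummands_mul m)
    (Set.Icc_subset_Icc (numSummands_mul_le hm) (le_numSummands m) hy)
  exact ⟨x, fun j ↦ cantorSet_subset_middleThirdsCantor (hx j trivial), rfl⟩
end

section
/- The set of sums of two squares of elements of the middle-thirds Cantor set misses the open interval (2/9, 4/9); that is, {x_1^2 + x_2^2 : x_1, x_2 ∈ 𝒞} ∩ (2/9, 4/9) = ∅. -/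
section DigitExpansion

variable {t : ℕ → ℝ}

lemma hasSum_two_div_three_pow_succ : HasSum (fun i : ℕ => 2 / (3 : ℝ) ^ (i + 1)) 1 := by
  have h := (hasSum_geometric_of_lt_one (r := (1 / 3 : ℝ)) (by norm_num) (by norm_num)).mul_left
    (2 / 3)
  have hterm : (fun i : ℕ => 2 / (3 : ℝ) ^ (i + 1)) = fun i => 2 / 3 * (1 / 3) ^ i := by
    funext i; rw [one_div, inv_pow, pow_succ]; field_simp
  rw [show (2 / 3 * (1 - 1 / 3)⁻¹ : ℝ) = 1 by norm_num] at h
  rwa [hterm]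

lemma summable_div_three_pow_succ (ht : ∀ i, t i ∈ Set.Icc (0 : ℝ) 2) :
    Summable (fun i : ℕ => t i / 3 ^ (i + 1)) :=
  .of_nonneg_of_le (fun i => by have := (ht i).1; positivity)
    (fun i => div_le_div_of_nonneg_right (ht i).2 (by positivity))
    hasSum_two_div_three_pow_succ.summable

lemma tsum_div_three_pow_succ_mem_Icc (ht : ∀ i, t i ∈ Set.Icc (0 : ℝ) 2) :
    ∑' i : ℕ, t i / 3 ^ (i + 1) ∈ Set.Icc (0 : ℝ) 1 := by
  refine ⟨tsum_nonneg fun i => by have := (ht i).1; positivity, ?_⟩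
  rw [← hasSum_two_div_three_pow_succ.tsum_eq]
  exact (summable_div_three_pow_succ ht).tsum_le_tsum
    (fun i => div_le_div_of_nonneg_right (ht i).2 (by positivity))
    hasSum_two_div_three_pow_succ.summable

lemma tsum_div_three_pow_succ_eq_head_add (ht : ∀ i, t i ∈ Set.Icc (0 : ℝ) 2) :
    ∑' i : ℕ, t i / 3 ^ (i + 1) = (t 0 + ∑' i : ℕ, t (i + 1) / 3 ^ (i + 1)) / 3 := by
  rw [(summable_div_three_pow_succ ht).tsum_eq_zero_add, add_div, ← tsum_div_const]
  congr 1
  · norm_num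
  · congr 1; ext i; rw [pow_succ, div_div]

end DigitExpansion

lemma mem_Icc_or_mem_Icc_of_mem_middleThirdsCantor {x : ℝ} (hx : x ∈ middleThirdsCantor) :
    x ∈ Set.Icc (0 : ℝ) (1 / 3) ∨ x ∈ Set.Icc (2 / 3 : ℝ) 1 := by
  obtain ⟨t, ht, rfl⟩ := hx
  have hdigit : ∀ i, t i ∈ Set.Icc (0 : ℝ) 2 := fun i => by
    rcases ht i with h | h <;> norm_num [h]
  obtain ⟨htail₀, htail₁⟩ := tsum_div_three_pow_succ_mem_Icc fun i => hdigit (i + 1)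
  rw [tsum_div_three_pow_succ_eq_head_add hdigit]
  rcases ht 0 with h | h <;> rw [h]
  · left; constructor <;> linarith
  · right; constructor <;> linarith

lemma sq_le_or_le_sq_of_mem_middleThirdsCantor {x : ℝ} (hx : x ∈ middleThirdsCantor) :
    x ^ 2 ≤ 1 / 9 ∨ 4 / 9 ≤ x ^ 2 := by
  rcases mem_Icc_or_mem_Icc_of_mem_middleThirdsCantor hx with ⟨h₀, h₁⟩ | ⟨h₀, -⟩
  · left; nlinarith
  · right; nlinarith

theorem two_squares_of_cantor_misses_Ioo :
    {x : ℝ | ∃ x₁ ∈ middleThirdsCantor, ∃ x₂ ∈ middleThirdsCantor,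
        x = x₁ ^ 2 + x₂ ^ 2} ∩ Set.Ioo (2 / 9 : ℝ) (4 / 9 : ℝ) = ∅ := by
  rw [Set.eq_empty_iff_forall_notMem]
  rintro x ⟨⟨x₁, h₁, x₂, h₂, rfl⟩, hlo, hhi⟩
  have := sq_nonneg x₁
  have := sq_nonneg x₂
  rcases sq_le_or_le_sq_of_mem_middleThirdsCantor h₁ with a | a <;>
    rcases sq_le_or_le_sq_of_mem_middleThirdsCantor h₂ with b | b <;> linarith
end

section
/- The closed interval [53/81, 71/81] is contained in the set of sums of four squares of elements of the middle-thirds Cantor set, i.e. [53/81, 71/81] ⊆ {x_1^2 + x_2^2 + x_3^2 + x_4^2 : x_1, x_2, x_3, x_4 ∈ 𝒞}. -/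
/-!
For `a, b, c ∈ 𝒞` the numbers `(6 + a) / 9`, `(3 - a) / 9`, `(2 + b) / 9`, `(2 + c) / 9` lie in `𝒞`
(prefix two ternary digits, and `𝒞 = 1 - 𝒞`); the sum of their squares, `sumSq a b c`, is `53/81`
at `a = b = c = 0` and `71/81` at `a = b = c = 1`, so it suffices that `sumSq` maps `𝒞³` onto
the interval between. Choose the ternary digits of `a, b, c` greedily, keeping `R` in the image
of the current box of side `3⁻ᵏ`: this image is the union of the images of the eight sub-boxes
of side `3⁻ᵏ⁻¹` with digits `0` or `2`, because in each coordinate the middle gap is shorter than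
the range the other coordinates contribute. By continuity the limit point is mapped to `R`.
-/

open Set Finset Filter Topology

theorem summable_div_three_pow_of_abs_le {t : ℕ → ℝ} {M : ℝ} (ht : ∀ i, |t i| ≤ M) :
    Summable fun i => t i / 3 ^ (i + 1) := by
  refine Summable.of_norm_bounded ((summable_geometric_of_lt_one (by norm_num : (0 : ℝ) ≤ 1 / 3)
    (by norm_num)).mul_left (M / 3)) fun i => ?_
  rw [Real.norm_eq_abs, abs_div, abs_of_pos (by positivity : (0 : ℝ) < 3 ^ (i + 1)), div_pow,
    one_pow, pow_succ]
  calc |t i| / (3 ^ i * 3) ≤ M / (3 ^ i * 3) := by gcongr; exact ht i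
    _ = M / 3 * (1 / 3 ^ i) := by ring

theorem summable_div_three_pow_of_digits {t : ℕ → ℝ} (ht : ∀ i, t i = 0 ∨ t i = 2) :
    Summable fun i => t i / 3 ^ (i + 1) :=
  summable_div_three_pow_of_abs_le (M := 2) fun i => by rcases ht i with h | h <;> norm_num [h]

theorem tsum_two_div_three_pow : ∑' i : ℕ, (2 : ℝ) / 3 ^ (i + 1) = 1 := by
  have h (i : ℕ) : (2 : ℝ) / 3 ^ (i + 1) = 2 / 3 * (1 / 3) ^ i := by
    rw [one_div_pow, pow_succ]; field_simp
  rw [tsum_congr h, tsum_mul_left, tsum_geometric_of_lt_one (by norm_num) (by norm_num)]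
  norm_num

theorem one_sub_mem_middleThirdsCantor {x : ℝ} (hx : x ∈ middleThirdsCantor) :
    1 - x ∈ middleThirdsCantor := by
  obtain ⟨t, ht, rfl⟩ := hx
  refine ⟨fun i => 2 - t i, fun i => by rcases ht i with h | h <;> norm_num [h], ?_⟩
  simp only [sub_div]
  rw [Summable.tsum_sub (summable_div_three_pow_of_abs_le (M := 2) fun _ => by norm_num)
    (summable_div_three_pow_of_digits ht), tsum_two_div_three_pow]

theorem digit_add_div_three_mem_middleThirdsCantor {x d : ℝ} (hx : x ∈ middleThirdsCantor)
    (hd : d = 0 ∨ d = 2) : (d + x) / 3 ∈ middleThirdsCantor := by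
  obtain ⟨t, ht, rfl⟩ := hx
  let T : ℕ → ℝ := fun | 0 => d | i + 1 => t i
  have hT : ∀ i, T i = 0 ∨ T i = 2 := fun | 0 => hd | i + 1 => ht i
  refine ⟨T, hT, ?_⟩
  rw [(summable_div_three_pow_of_digits hT).tsum_eq_zero_add]
  have h (i : ℕ) : T (i + 1) / 3 ^ (i + 1 + 1) = t i / 3 ^ (i + 1) / 3 := by
    rw [pow_succ, div_div]
  rw [tsum_congr h, tsum_div_const]
  change _ = d / 3 ^ (0 + 1) + _
  ring

theorem exists_digits_of_forall_step {ι : Type*} (P : ℕ → (ι → ℝ) → Prop) (h0 : P 0 0)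
    (hstep : ∀ k y, P k y → ∃ t : ι → ℝ, (∀ j, t j = 0 ∨ t j = 2) ∧
      P (k + 1) (y + (3 ^ (k + 1) : ℝ)⁻¹ • t)) :
    ∃ t : ι → ℕ → ℝ, (∀ j i, t j i = 0 ∨ t j i = 2) ∧
      ∀ k, P k fun j => ∑ i ∈ range k, t j i / 3 ^ (i + 1) := by
  choose next hnext using hstep
  let y : (k : ℕ) → {y // P k y} := fun k => Nat.rec ⟨0, h0⟩
    (fun k y => ⟨y.1 + (3 ^ (k + 1) : ℝ)⁻¹ • next k y.1 y.2, (hnext k y.1 y.2).2⟩) k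
  refine ⟨fun j i => next i (y i).1 (y i).2 j, fun j i => (hnext _ _ _).1 j, fun k => ?_⟩
  have hy : (y k).1 = fun j => ∑ i ∈ range k, next i (y i).1 (y i).2 j / 3 ^ (i + 1) := by
    induction k with
    | zero => rfl
    | succ k ih =>
      funext j
      change (y k).1 j + (3 ^ (k + 1) : ℝ)⁻¹ * next k (y k).1 (y k).2 j = _
      rw [congrFun ih j, sum_range_succ, div_eq_inv_mul _ (3 ^ (k + 1) : ℝ), mul_comm]
  exact hy ▸ (y k).2

noncomputable def pairSq (a : ℝ) : ℝ := ((6 + a) / 9) ^ 2 + ((3 - a) / 9) ^ 2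

noncomputable def shiftSq (b : ℝ) : ℝ := ((2 + b) / 9) ^ 2

noncomputable def sumSq (a b c : ℝ) : ℝ := pairSq a + shiftSq b + shiftSq c

theorem exists_digit_mem_Icc (f : ℝ → ℝ) {p u lo hi x : ℝ}
    (hx : x ∈ Icc (lo + f p) (hi + f (p + 3 * u)))
    (hgap : lo + f (p + 2 * u) ≤ hi + f (p + u)) :
    ∃ t : ℝ, (t = 0 ∨ t = 2) ∧ x ∈ Icc (lo + f (p + t * u)) (hi + f (p + t * u + u)) := by
  rcases le_or_gt x (hi + f (p + u)) with h | h
  · exact ⟨0, Or.inl rfl, by simpa using ⟨hx.1, h⟩⟩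
  · refine ⟨2, Or.inr rfl, ?_, ?_⟩
    · linarith
    · convert hx.2 using 3; ring

theorem add_digit_mul_mem_Icc {p t u : ℝ} (hu : 0 ≤ u) (hp : p ∈ Icc 0 (1 - 3 * u))
    (ht : t = 0 ∨ t = 2) : p + t * u ∈ Icc 0 (1 - u) := by
  rcases ht with rfl | rfl <;> constructor <;> linarith [hp.1, hp.2]

theorem exists_digits_mem_Icc_sumSq {u a b c R : ℝ} (hu : 0 < u) (ha : a ∈ Icc 0 (1 - 3 * u))
    (hb : b ∈ Icc 0 (1 - 3 * u)) (hc : c ∈ Icc 0 (1 - 3 * u))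
    (hR : R ∈ Icc (sumSq a b c) (sumSq (a + 3 * u) (b + 3 * u) (c + 3 * u))) :
    ∃ ta tb tc : ℝ, (ta = 0 ∨ ta = 2) ∧ (tb = 0 ∨ tb = 2) ∧ (tc = 0 ∨ tc = 2) ∧
      R ∈ Icc (sumSq (a + ta * u) (b + tb * u) (c + tc * u))
        (sumSq (a + ta * u + u) (b + tb * u + u) (c + tc * u + u)) := by
  simp only [sumSq] at hR ⊢
  -- The gap of `b` is bridged by the full ranges of `a` and `c`, then the gap of `a` by the
  -- range of `c`, and finally the gap of `c` by the chosen sub-intervals of `a` and `b`.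
  obtain ⟨tb, htb, hRb⟩ := exists_digit_mem_Icc shiftSq (x := R) (p := b) (u := u)
    (lo := pairSq a + shiftSq c) (hi := pairSq (a + 3 * u) + shiftSq (c + 3 * u))
    (by constructor <;> linarith [hR.1, hR.2])
    (by
      simp only [pairSq, shiftSq]
      nlinarith [mul_nonneg hu.le ha.1, mul_nonneg hu.le hb.1, mul_nonneg hu.le hc.1, hb.2])
  have hb' := add_digit_mul_mem_Icc hu.le hb htb
  obtain ⟨ta, hta, hRa⟩ := exists_digit_mem_Icc pairSq (x := R) (p := a) (u := u)
    (lo := shiftSq (b + tb * u) + shiftSq c)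
    (hi := shiftSq (b + tb * u + u) + shiftSq (c + 3 * u))
    (by constructor <;> linarith [hRb.1, hRb.2])
    (by
      simp only [pairSq, shiftSq]
      nlinarith [mul_nonneg hu.le ha.1, mul_nonneg hu.le hb'.1, mul_nonneg hu.le hc.1, ha.2])
  have ha' := add_digit_mul_mem_Icc hu.le ha hta
  obtain ⟨tc, htc, hRc⟩ := exists_digit_mem_Icc shiftSq (x := R) (p := c) (u := u)
    (lo := pairSq (a + ta * u) + shiftSq (b + tb * u))
    (hi := pairSq (a + ta * u + u) + shiftSq (b + tb * u + u))
    (by constructor <;> linarith [hRa.1, hRa.2])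
    (by
      simp only [pairSq, shiftSq]
      nlinarith [mul_nonneg hu.le ha'.1, mul_nonneg hu.le hb'.1, mul_nonneg hu.le hc.1, hc.2])
  exact ⟨ta, tb, tc, hta, htb, htc, by constructor <;> linarith [hRc.1, hRc.2]⟩

/-- `R` lies in the image under the increasing map `sumSq` of the box `y + [0, 3⁻ᵏ]³ ⊆ [0, 1]³`. -/
def SumSqBracket (R : ℝ) (k : ℕ) (y : Fin 3 → ℝ) : Prop :=
  (∀ j, y j ∈ Icc 0 (1 - (3 ^ k : ℝ)⁻¹)) ∧
    R ∈ Icc (sumSq (y 0) (y 1) (y 2))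
      (sumSq (y 0 + (3 ^ k)⁻¹) (y 1 + (3 ^ k)⁻¹) (y 2 + (3 ^ k)⁻¹))

theorem SumSqBracket.exists_digits_succ {R : ℝ} {k : ℕ} {y : Fin 3 → ℝ}
    (h : SumSqBracket R k y) : ∃ t : Fin 3 → ℝ, (∀ j, t j = 0 ∨ t j = 2) ∧
      SumSqBracket R (k + 1) (y + (3 ^ (k + 1) : ℝ)⁻¹ • t) := by
  set u : ℝ := (3 ^ (k + 1))⁻¹
  have hu : 0 < u := by positivity
  have h3u : (3 ^ k : ℝ)⁻¹ = 3 * u := by simp only [u, pow_succ]; field_simp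
  obtain ⟨hy, hR⟩ := h
  rw [h3u] at hy hR
  obtain ⟨ta, tb, tc, hta, htb, htc, hR'⟩ :=
    exists_digits_mem_Icc_sumSq hu (hy 0) (hy 1) (hy 2) hR
  refine ⟨![ta, tb, tc], fun j => by fin_cases j <;> assumption, fun j => ?_, ?_⟩
  · rw [Pi.add_apply, Pi.smul_apply, smul_eq_mul, mul_comm]
    fin_cases j
    exacts [add_digit_mul_mem_Icc hu.le (hy 0) hta, add_digit_mul_mem_Icc hu.le (hy 1) htb,
      add_digit_mul_mem_Icc hu.le (hy 2) htc]
  · simpa [mul_comm u] using hR'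

theorem sumSqBracket_zero {R : ℝ} (hR : R ∈ Icc (sumSq 0 0 0) (sumSq 1 1 1)) :
    SumSqBracket R 0 0 :=
  ⟨fun _ => by norm_num, by simpa using hR⟩

theorem exists_mem_middleThirdsCantor_sumSq_eq {R : ℝ}
    (hR : R ∈ Icc (sumSq 0 0 0) (sumSq 1 1 1)) :
    ∃ a ∈ middleThirdsCantor, ∃ b ∈ middleThirdsCantor, ∃ c ∈ middleThirdsCantor,
      sumSq a b c = R := by
  obtain ⟨t, ht, hbracket⟩ := exists_digits_of_forall_step (SumSqBracket R)
    (sumSqBracket_zero hR) fun _ _ h => h.exists_digits_succ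
  set x : Fin 3 → ℝ := fun j => ∑' i, t j i / 3 ^ (i + 1)
  have hy : Tendsto (fun k j => ∑ i ∈ range k, t j i / 3 ^ (i + 1)) atTop (𝓝 x) :=
    tendsto_pi_nhds.2 fun j => (summable_div_three_pow_of_digits (ht j)).hasSum.tendsto_sum_nat
  have hw : Tendsto (fun k : ℕ => fun _ : Fin 3 => (3 ^ k : ℝ)⁻¹) atTop (𝓝 0) :=
    tendsto_pi_nhds.2 fun _ => tendsto_inv_atTop_zero.comp
      (tendsto_pow_atTop_atTop_of_one_lt (by norm_num))
  have hS : Continuous fun y : Fin 3 → ℝ => sumSq (y 0) (y 1) (y 2) := by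
    unfold sumSq pairSq shiftSq; fun_prop
  have hlo := (hS.tendsto x).comp hy
  have hhi := (hS.tendsto x).comp (add_zero x ▸ hy.add hw)
  exact ⟨x 0, ⟨t 0, ht 0, rfl⟩, x 1, ⟨t 1, ht 1, rfl⟩, x 2, ⟨t 2, ht 2, rfl⟩,
    le_antisymm (le_of_tendsto' hlo fun k => (hbracket k).2.1)
      (ge_of_tendsto' hhi fun k => (hbracket k).2.2)⟩

theorem Icc_subset_four_squares_of_cantor :
    Set.Icc (53 / 81 : ℝ) (71 / 81 : ℝ) ⊆
      {x : ℝ | ∃ x₁ ∈ middleThirdsCantor, ∃ x₂ ∈ middleThirdsCantor,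
        ∃ x₃ ∈ middleThirdsCantor, ∃ x₄ ∈ middleThirdsCantor,
          x = x₁ ^ 2 + x₂ ^ 2 + x₃ ^ 2 + x₄ ^ 2} := by
  intro s hs
  have hwindow : Icc (53 / 81 : ℝ) (71 / 81) = Icc (sumSq 0 0 0) (sumSq 1 1 1) := by
    norm_num [sumSq, pairSq, shiftSq]
  obtain ⟨a, ha, b, hb, c, hc, rfl⟩ := exists_mem_middleThirdsCantor_sumSq_eq (hwindow ▸ hs)
  have prepend₂ {x d₁ d₂ : ℝ} (hx : x ∈ middleThirdsCantor) (hd₁ : d₁ = 0 ∨ d₁ = 2)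
      (hd₂ : d₂ = 0 ∨ d₂ = 2) : (d₁ + (d₂ + x) / 3) / 3 ∈ middleThirdsCantor :=
    digit_add_div_three_mem_middleThirdsCantor
      (digit_add_div_three_mem_middleThirdsCantor hx hd₂) hd₁
  refine ⟨_, prepend₂ ha (Or.inr rfl) (Or.inl rfl),
    _, prepend₂ (one_sub_mem_middleThirdsCantor ha) (Or.inl rfl) (Or.inr rfl),
    _, prepend₂ hb (Or.inl rfl) (Or.inr rfl), _, prepend₂ hc (Or.inl rfl) (Or.inr rfl), ?_⟩
  simp only [sumSq, pairSq, shiftSq]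
  ring
end
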